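/- Every feasible point x ∈ S(A,b) dominates some selection point: there exists a selection e with e(i) ∈ J̄_i for all i such that X(e) ≤ x componentwise. -/

import Mathlib

/-- The Łukasiewicz t-norm. -/
noncomputable def TL (a x : ℝ) : ℝ := max (a + x - 1) 0

/-- The candidate maximum solution `x̄` (empty min = 1, handled by the `if`). -/
noncomputable def xbar {m n : ℕ} [NeZero m] (A : Fin m → Fin n → ℝ) (b : Fin m → ℝ)
    (j : Fin n) : ℝ :=
  Finset.univ.inf' Finset.univ_nonempty
    (fun i => if b i ≤ A i j then b i + 1 - A i j else 1)

/-- `x` is a feasible solution of the system `A φ x = b`. -/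
def Feasible {m n : ℕ} [NeZero m] [NeZero n] (A : Fin m → Fin n → ℝ) (b : Fin m → ℝ)
    (x : Fin n → ℝ) : Prop :=
  (∀ j, x j ∈ Set.Icc (0:ℝ) 1) ∧
  ∀ i, Finset.univ.sup' Finset.univ_nonempty (fun j => TL (A i j) (x j)) = b i

/-- The candidate minimal point `X(e)` associated to a selection `e`
(empty max = 0, handled by the `if`). -/
noncomputable def Xe {m n : ℕ} [NeZero m] (A : Fin m → Fin n → ℝ) (b : Fin m → ℝ)
    (e : Fin m → Fin n) (j : Fin n) : ℝ :=
  Finset.univ.sup' Finset.univ_nonempty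
    (fun i => if e i = j ∧ b i ≠ 0 then b i + 1 - A i j else 0)

/-- `e` is a valid selection: `e i ∈ J̄ᵢ` for every `i`. -/
def ValidSel {m n : ℕ} [NeZero m] (A : Fin m → Fin n → ℝ) (b : Fin m → ℝ)
    (e : Fin m → Fin n) : Prop :=
  ∀ i, b i ≤ A i (e i) ∧ TL (A i (e i)) (xbar A b (e i)) = b i

/-! A feasible `x` attains every row maximum `b i` at some column; choosing such a column
`e i` for each row gives the selection. Where `b i > 0` the equality
`TL (A i (e i)) (x (e i)) = b i` is linear, so `x (e i) = b i + 1 - A i (e i)`, which is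
exactly the contribution of row `i` to `X(e)`; and `x ≤ x̄` forces `e i ∈ J̄ᵢ`. -/

lemma TL_nonneg (a x : ℝ) : 0 ≤ TL a x := le_max_right _ _

lemma TL_mono_right {a x y : ℝ} (hxy : x ≤ y) : TL a x ≤ TL a y :=
  max_le_max (by linarith) le_rfl

lemma TL_le_iff {a x b : ℝ} : TL a x ≤ b ↔ a + x - 1 ≤ b ∧ 0 ≤ b := max_le_iff

lemma TL_eq_iff_of_pos {a x b : ℝ} (hb : 0 < b) : TL a x = b ↔ a + x - 1 = b := by
  unfold TL
  constructor
  · intro h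
    rcases max_cases (a + x - 1) 0 with ⟨h1, _⟩ | ⟨h1, _⟩ <;> linarith
  · intro h
    rw [max_eq_left (by linarith), h]

lemma xbar_le {m n : ℕ} [NeZero m] {A : Fin m → Fin n → ℝ} {b : Fin m → ℝ} {i : Fin m}
    {j : Fin n} (h : b i ≤ A i j) : xbar A b j ≤ b i + 1 - A i j := by
  unfold xbar
  simpa only [h, if_true] using
    Finset.inf'_le (fun i => if b i ≤ A i j then b i + 1 - A i j else 1) (Finset.mem_univ i)

namespace Feasible

variable {m n : ℕ} [NeZero m] [NeZero n] {A : Fin m → Fin n → ℝ} {b : Fin m → ℝ}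
  {x : Fin n → ℝ}

lemma TL_le (hx : Feasible A b x) (i : Fin m) (j : Fin n) : TL (A i j) (x j) ≤ b i :=
  hx.2 i ▸ Finset.le_sup' (fun j => TL (A i j) (x j)) (Finset.mem_univ j)

lemma rhs_nonneg (hx : Feasible A b x) (i : Fin m) : 0 ≤ b i :=
  (TL_nonneg _ _).trans (hx.TL_le i 0)

lemma exists_TL_eq (hx : Feasible A b x) (i : Fin m) : ∃ j, TL (A i j) (x j) = b i := by
  obtain ⟨j, -, hj⟩ := Finset.exists_mem_eq_sup' Finset.univ_nonempty
    (fun j => TL (A i j) (x j))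
  exact ⟨j, hj ▸ hx.2 i⟩

lemma le_xbar (hx : Feasible A b x) (j : Fin n) : x j ≤ xbar A b j := by
  refine Finset.le_inf' _ _ fun i _ => ?_
  split_ifs
  · linarith [(TL_le_iff.1 (hx.TL_le i j)).1]
  · exact (hx.1 j).2

variable {e : Fin m → Fin n} (hx : Feasible A b x) (he : ∀ i, TL (A i (e i)) (x (e i)) = b i)
include hx he

lemma validSel_of_TL_eq (hA : ∀ i j, 0 ≤ A i j) : ValidSel A b e := by
  intro i
  have hble : b i ≤ A i (e i) := by
    rcases (hx.rhs_nonneg i).eq_or_lt with hb0 | hbpos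
    · exact hb0 ▸ hA i (e i)
    · linarith [(TL_eq_iff_of_pos hbpos).1 (he i), (hx.1 (e i)).2]
  refine ⟨hble, le_antisymm ?_ ?_⟩
  · exact TL_le_iff.2 ⟨by linarith [xbar_le hble], hx.rhs_nonneg i⟩
  · exact he i ▸ TL_mono_right (hx.le_xbar (e i))

lemma Xe_le_of_TL_eq (j : Fin n) : Xe A b e j ≤ x j := by
  refine Finset.sup'_le _ _ fun i _ => ?_
  split_ifs with h
  · obtain ⟨rfl, hb0⟩ := h
    have hbpos : 0 < b i := (hx.rhs_nonneg i).lt_of_ne' hb0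
    linarith [(TL_eq_iff_of_pos hbpos).1 (he i)]
  · exact (hx.1 j).1

end Feasible

theorem stmt_13_general (m n : ℕ) [NeZero m] [NeZero n] (A : Fin m → Fin n → ℝ) (b : Fin m → ℝ)
    (hA : ∀ i j, A i j ∈ Set.Icc (0:ℝ) 1)
    (x : Fin n → ℝ) (hx : Feasible A b x) :
    ∃ e : Fin m → Fin n, ValidSel A b e ∧ ∀ j, Xe A b e j ≤ x j := by
  choose e he using hx.exists_TL_eq
  exact ⟨e, hx.validSel_of_TL_eq he fun i j => (hA i j).1, hx.Xe_le_of_TL_eq he⟩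

theorem stmt_13 (m n : ℕ) [NeZero m] [NeZero n] (A : Fin m → Fin n → ℝ) (b : Fin m → ℝ)
    (hA : ∀ i j, A i j ∈ Set.Icc (0:ℝ) 1) (hb : ∀ i, b i ∈ Set.Icc (0:ℝ) 1)
    (x : Fin n → ℝ) (hx : Feasible A b x) :
    ∃ e : Fin m → Fin n, ValidSel A b e ∧ ∀ j, Xe A b e j ≤ x j :=
  stmt_13_general m n A b hA x hx
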